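/- Let k be a field of characteristic zero, X a finite type equipped with a fixed-point-free involution c : X → X, and Σ a subset of X such that Σ and c(Σ) are disjoint with union X; let g = |Σ|. Fix a linear order on X, let V be the k-vector space with basis (e_x)_{x∈X}, and in Λ(V) set L = ∑_{σ∈Σ} e_σ ∧ e_{cσ}, writing e_S for the ordered wedge product over S ⊆ X. Let I ⊆ Σ and J ⊆ c(Σ) with |I| + |J| = i ≤ g. If I ∩ c(J) ≠ ∅, then L^{g-i+1} ∧ e_{I∪J} ≠ 0. -/

import Mathlib

/-- The basis vector `e_x` of `V = X → k` inside the exterior algebra `Λ(V)`. -/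
noncomputable def eVec (k : Type*) {X : Type*} [Field k] [DecidableEq X] (x : X) :
    ExteriorAlgebra k (X → k) :=
  ExteriorAlgebra.ι k (Pi.single x 1)

/-- The ordered wedge product `e_S = ⋀_{x ∈ S} e_x` over a finite subset `S ⊆ X`,
taken in the fixed linear order on `X`. -/
noncomputable def eWedge (k : Type*) {X : Type*} [Field k] [LinearOrder X] (S : Finset X) :
    ExteriorAlgebra k (X → k) :=
  ((S.sort (· ≤ ·)).map (eVec k)).prod

/-- The isotypic component `L_σ = e_σ ∧ e_{cσ}` of the Lefschetz class. -/
noncomputable def Lsigma (k : Type*) {X : Type*} [Field k] [DecidableEq X] (c : X → X) (σ : X) :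
    ExteriorAlgebra k (X → k) :=
  eVec k σ * eVec k (c σ)

/-- The product `L_K = ∏_{σ ∈ K} L_σ` (the factors `L_σ` have even degree, hence commute,
so the ordered product represents the product). -/
noncomputable def LK (k : Type*) {X : Type*} [Field k] [LinearOrder X] (c : X → X)
    (K : Finset X) : ExteriorAlgebra k (X → k) :=
  ((K.sort (· ≤ ·)).map (Lsigma k c)).prod

/-- The Lefschetz class `L = ∑_{σ ∈ Σ} L_σ = ∑_{σ ∈ Σ} e_σ ∧ e_{cσ}`. -/
noncomputable def Lef (k : Type*) {X : Type*} [Field k] [DecidableEq X] (c : X → X)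
    (S : Finset X) : ExteriorAlgebra k (X → k) :=
  ∑ σ ∈ S, Lsigma k c σ

/-
Let `m = g - i + 1`. As `I ∩ c(J) ≠ ∅`, the set `I ∪ c(J) ⊆ Σ` has at most `i - 1` elements,
so some `K ⊆ Σ` with `|K| = m` avoids it. The algebra endomorphism of `Λ(V)` induced by killing
the basis vectors `e_σ`, `σ ∈ Σ \ (K ∪ I)`, fixes `e_{I∪J}` and sends `L` to `∑_{σ ∈ K} L_σ + B`,
where `B` commutes with the first sum and `B ∧ e_{I∪J} = 0`: each surviving `L_σ` with `σ ∉ K`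
has `σ ∈ I`. So `L^m ∧ e_{I∪J}` is sent to `(∑_{σ ∈ K} L_σ)^m ∧ e_{I∪J} = m! L_K ∧ e_{I∪J}`,
where `m! ≠ 0` in characteristic zero and `L_K ∧ e_{I∪J}` is, up to sign, the wedge of the
distinct basis vectors indexed by `K ∪ c(K) ∪ I ∪ J`.
-/

open ExteriorAlgebra

section Ring
variable {R : Type*} [Ring R]

theorem Commute.add_pow_mul_eq_pow_mul {a b x : R} (hab : Commute a b) (hbx : b * x = 0)
    (n : ℕ) : (a + b) ^ n * x = a ^ n * x := by
  induction n generalizing x with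
  | zero => simp
  | succ n ih =>
    have hbax : b * (a * x) = 0 := by rw [← mul_assoc, ← hab.eq, mul_assoc, hbx, mul_zero]
    rw [pow_succ, mul_assoc, add_mul, hbx, add_zero, ih hbax, ← mul_assoc, ← pow_succ]

theorem Commute.add_pow_succ_of_mul_self_eq_zero {a s : R} (has : Commute a s) (ha : a * a = 0)
    (n : ℕ) : (a + s) ^ (n + 1) = s ^ (n + 1) + (n + 1) • (a * s ^ n) := by
  induction n with
  | zero => simp [add_comm]
  | succ n ih =>
    have hsa : s * (a * s ^ n) = a * s ^ (n + 1) := by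
      rw [← mul_assoc, ← has.eq, mul_assoc, ← pow_succ']
    rw [pow_succ' _ (n + 1), ih, mul_add, add_mul, add_mul, mul_smul_comm, mul_smul_comm,
      ← mul_assoc a a, ha, zero_mul, smul_zero, zero_add, hsa, ← pow_succ', succ_nsmul _ (n + 1)]
    abel

theorem List.mul_prod_eq_zero_of_mem {a : R} {l : List R} (ha : a * a = 0) (hal : a ∈ l)
    (hcomm : ∀ b ∈ l, Commute a b) : a * l.prod = 0 := by
  induction l with
  | nil => simp at hal
  | cons b t ih =>
    rw [List.prod_cons]
    rcases List.mem_cons.mp hal with rfl | hat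
    · rw [← mul_assoc, ha, zero_mul]
    · rw [← mul_assoc, (hcomm b List.mem_cons_self).eq, mul_assoc,
        ih hat fun x hx => hcomm x (List.mem_cons_of_mem b hx), mul_zero]

theorem List.sum_mul_prod_eq_zero {l : List R} (hsq : ∀ a ∈ l, a * a = 0)
    (hcomm : ∀ a ∈ l, ∀ b ∈ l, Commute a b) : l.sum * l.prod = 0 := by
  rw [show l.sum * l.prod = (l.map (· * l.prod)).sum by
    simpa using (List.sum_map_mul_right l id l.prod).symm]
  refine List.sum_eq_zero fun y hy => ?_
  obtain ⟨x, hx, rfl⟩ := List.mem_map.mp hy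
  exact List.mul_prod_eq_zero_of_mem (hsq x hx) hx (hcomm x hx)

theorem List.sum_pow_length_of_mul_self_eq_zero {l : List R} (hsq : ∀ a ∈ l, a * a = 0)
    (hcomm : ∀ a ∈ l, ∀ b ∈ l, Commute a b) : l.sum ^ l.length = l.length.factorial • l.prod := by
  induction l with
  | nil => simp
  | cons a t ih =>
    have hsq' : ∀ x ∈ t, x * x = 0 := fun x hx => hsq x (mem_cons_of_mem a hx)
    have hcomm' : ∀ x ∈ t, ∀ y ∈ t, Commute x y :=
      fun x hx y hy => hcomm x (mem_cons_of_mem a hx) y (mem_cons_of_mem a hy)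
    have hpow : t.sum ^ (t.length + 1) = 0 := by
      rw [pow_succ', ih hsq' hcomm', mul_smul_comm, List.sum_mul_prod_eq_zero hsq' hcomm', smul_zero]
    have hat : Commute a t.sum :=
      Commute.list_sum_right a t fun b hb => hcomm a mem_cons_self b (mem_cons_of_mem a hb)
    rw [sum_cons, length_cons, hat.add_pow_succ_of_mul_self_eq_zero (hsq a mem_cons_self), hpow,
      zero_add, ih hsq' hcomm', mul_smul_comm, smul_smul, prod_cons, Nat.factorial_succ]

end Ring

theorem List.nodup_flatMap_pair {α : Type*} {c : α → α} (hc : Function.Injective c) {l : List α}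
    (hl : l.Nodup) (hcl : ∀ x ∈ l, ∀ y ∈ l, c x ≠ y) : (l.flatMap fun x => [x, c x]).Nodup := by
  refine List.nodup_flatMap.mpr ⟨fun x hx => ?_, hl.imp_of_mem fun hx hy hxy => ?_⟩
  · simpa using (hcl x hx x hx).symm
  · simp [hxy.symm, (hcl _ hx _ hy).symm, hcl _ hy _ hx, (hc.ne hxy).symm]

theorem Finset.card_add_one_le_card_sdiff_union_add {α : Type*} [DecidableEq α]
    {S A B : Finset α} (hA : A ⊆ S) (hB : B ⊆ S) (hAB : (A ∩ B).Nonempty) :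
    S.card + 1 ≤ (S \ (A ∪ B)).card + A.card + B.card := by
  have := Finset.card_union_add_card_inter A B
  have := Finset.card_sdiff_add_card_eq_card (Finset.union_subset hA hB)
  have := hAB.card_pos
  omega

namespace ExteriorAlgebra
variable {R M : Type*} [CommRing R] [AddCommGroup M] [Module R M]

theorem ι_mul_ι_commute_ι (u v w : M) : Commute (ι R u * ι R v) (ι R w) := by
  have anticomm (x y : M) : ι R x * ι R y = -(ι R y * ι R x) :=
    eq_neg_of_add_eq_zero_left (ι_add_mul_swap x y)
  show ι R u * ι R v * ι R w = ι R w * (ι R u * ι R v)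
  rw [mul_assoc, anticomm v w, mul_neg, ← mul_assoc, anticomm u w, neg_mul, neg_neg, mul_assoc]

theorem ι_mul_ι_commute (u v w z : M) : Commute (ι R u * ι R v) (ι R w * ι R z) :=
  (ι_mul_ι_commute_ι u v w).mul_right (ι_mul_ι_commute_ι u v z)

theorem ι_mul_ι_mul_self (u v : M) : ι R u * ι R v * (ι R u * ι R v) = 0 := by
  rw [← mul_assoc, (ι_mul_ι_commute_ι u v u).eq, ← mul_assoc, ι_sq_zero, zero_mul, zero_mul]

theorem ιMulti_ne_zero_of_linearIndependent {K E : Type*} [Field K] [AddCommGroup E]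
    [Module K E] {n : ℕ} {v : Fin n → E} (hv : LinearIndependent K v) : ιMulti K n v ≠ 0 := by
  let s : Set.powersetCard (Fin n) n := ⟨Finset.univ, by simp⟩
  have hs : ⇑(Set.powersetCard.ofFinEmbEquiv.symm s) = id := (OrderEmbedding.strictMono _).eq_id
  have := (exteriorPower.ιMulti_family_linearIndependent_field (n := n) hv).ne_zero s
  rwa [exteriorPower.ιMulti_family, hs, Function.comp_id, ne_eq, ← Subtype.coe_inj,
    exteriorPower.ιMulti_apply_coe] at this

end ExteriorAlgebra

section Basis
variable {k X : Type*} [Field k] [DecidableEq X]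

theorem prod_map_eVec_eq_ιMulti (l : List X) :
    (l.map (eVec k)).prod = ιMulti k l.length fun i => Pi.single (l.get i) 1 := by
  rw [ιMulti_apply]
  conv_lhs => rw [← List.ofFn_get l, List.map_ofFn]
  rfl

theorem prod_map_eVec_ne_zero_iff {l : List X} : (l.map (eVec k)).prod ≠ 0 ↔ l.Nodup := by
  rw [prod_map_eVec_eq_ιMulti, List.nodup_iff_injective_get]
  refine ⟨fun h => ?_, fun h => ιMulti_ne_zero_of_linearIndependent ?_⟩
  · by_contra hinj
    exact h (ιMulti_eq_zero_of_not_inj fun hv =>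
      hinj (hv.of_comp (f := fun x : X => (Pi.single x 1 : X → k))))
  · exact (Pi.linearIndependent_single_one X k).comp _ h

theorem Lsigma_mul_self (c : X → X) (σ : X) : Lsigma k c σ * Lsigma k c σ = 0 :=
  ι_mul_ι_mul_self _ _

theorem Lsigma_commute (c : X → X) (σ τ : X) : Commute (Lsigma k c σ) (Lsigma k c τ) :=
  ι_mul_ι_commute _ _ _ _

theorem prod_map_Lsigma (c : X → X) (l : List X) :
    (l.map (Lsigma k c)).prod = ((l.flatMap fun σ => [σ, c σ]).map (eVec k)).prod := by
  induction l with
  | nil => simp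
  | cons σ t ih => simp [ih, Lsigma, mul_assoc]

variable (k) in
def zeroCoords (D : Finset X) : (X → k) →ₗ[k] (X → k) :=
  LinearMap.pi fun x => if x ∈ D then 0 else LinearMap.proj x

theorem map_zeroCoords_eVec (D : Finset X) (x : X) :
    ExteriorAlgebra.map (zeroCoords k D) (eVec k x) = if x ∈ D then 0 else eVec k x := by
  have hsingle : zeroCoords k D (Pi.single x 1) = if x ∈ D then 0 else Pi.single x 1 := by
    ext y
    by_cases hyx : y = x
    · subst hyx; by_cases hy : y ∈ D <;> simp [zeroCoords, hy]
    · by_cases hy : y ∈ D <;> split_ifs <;> simp [zeroCoords, hy, hyx]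
  rw [eVec, map_apply_ι, hsingle]
  split_ifs <;> simp

end Basis

section Ordered
variable {k X : Type*} [Field k] [LinearOrder X]

theorem sum_Lsigma_pow_card (c : X → X) (K : Finset X) :
    (∑ σ ∈ K, Lsigma k c σ) ^ K.card = K.card.factorial • LK k c K := by
  have hsum : ∑ σ ∈ K, Lsigma k c σ = ((K.sort (· ≤ ·)).map (Lsigma k c)).sum := by
    rw [Finset.sum_eq_multiset_sum, ← Finset.sort_eq K (· ≤ ·), Multiset.map_coe, Multiset.sum_coe]
  have hlen : ((K.sort (· ≤ ·)).map (Lsigma k c)).length = K.card := by simp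
  rw [hsum, ← hlen, List.sum_pow_length_of_mul_self_eq_zero, hlen, LK]
  · simp [Lsigma_mul_self]
  · simp [Lsigma_commute]

variable {c : X → X}

theorem Lsigma_mul_eWedge_of_mem {σ : X} {T : Finset X} (hσ : σ ∈ T) :
    Lsigma k c σ * eWedge k T = 0 := by
  have hprod : Lsigma k c σ * eWedge k T = ((σ :: c σ :: T.sort (· ≤ ·)).map (eVec k)).prod := by
    simp [Lsigma, eWedge, mul_assoc]
  rw [hprod, ← not_ne_iff, prod_map_eVec_ne_zero_iff]
  simp [hσ]

theorem map_zeroCoords_eWedge {D T : Finset X} (h : Disjoint T D) :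
    ExteriorAlgebra.map (zeroCoords k D) (eWedge k T) = eWedge k T := by
  rw [eWedge, map_list_prod, List.map_map]
  congr 1
  refine List.map_congr_left fun x hx => ?_
  rw [Function.comp_apply, map_zeroCoords_eVec,
    if_neg (Finset.disjoint_left.mp h ((Finset.mem_sort _).mp hx))]

variable {S I J K : Finset X}

theorem map_zeroCoords_Lef_pow_mul_eWedge (hdisj : Disjoint S (S.image c)) (hJ : J ⊆ S.image c)
    (hKS : K ⊆ S) (n : ℕ) :
    ExteriorAlgebra.map (zeroCoords k (S \ (K ∪ I))) (Lef k c S ^ n * eWedge k (I ∪ J)) =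
      (∑ σ ∈ K, Lsigma k c σ) ^ n * eWedge k (I ∪ J) := by
  set φ := ExteriorAlgebra.map (zeroCoords k (S \ (K ∪ I)))
  have hφe : φ (eWedge k (I ∪ J)) = eWedge k (I ∪ J) := by
    refine map_zeroCoords_eWedge (Finset.disjoint_left.mpr fun x hx hxD => ?_)
    obtain ⟨hxS, hxKI⟩ := Finset.mem_sdiff.mp hxD
    rcases Finset.mem_union.mp hx with hxI | hxJ
    · exact hxKI (Finset.mem_union_right _ hxI)
    · exact Finset.disjoint_left.mp hdisj hxS (hJ hxJ)
  have hφL : ∀ σ ∈ K, φ (Lsigma k c σ) = Lsigma k c σ := by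
    intro σ hσ
    have hcσ : c σ ∉ S := fun h =>
      Finset.disjoint_left.mp hdisj h (Finset.mem_image_of_mem c (hKS hσ))
    simp [φ, Lsigma, map_zeroCoords_eVec, hσ, hcσ]
  have hrest : (∑ σ ∈ S \ K, φ (Lsigma k c σ)) * eWedge k (I ∪ J) = 0 := by
    rw [Finset.sum_mul]
    refine Finset.sum_eq_zero fun σ hσ => ?_
    by_cases hσI : σ ∈ I
    · rw [← hφe, ← map_mul, Lsigma_mul_eWedge_of_mem (Finset.mem_union_left _ hσI), map_zero]
    · have hσD : σ ∈ S \ (K ∪ I) := by simp_all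
      simp [φ, Lsigma, map_zeroCoords_eVec, hσD]
  have hcomm : Commute (∑ σ ∈ K, Lsigma k c σ) (∑ σ ∈ S \ K, φ (Lsigma k c σ)) :=
    Commute.sum_left _ _ _ fun τ _ => Commute.sum_right _ _ _ fun σ _ => by
      simp only [φ, Lsigma, eVec, map_mul, map_apply_ι]
      exact ι_mul_ι_commute _ _ _ _
  rw [map_mul, map_pow, hφe, Lef, map_sum, ← Finset.sum_sdiff hKS, add_comm,
    Finset.sum_congr rfl hφL, hcomm.add_pow_mul_eq_pow_mul hrest]

theorem LK_mul_eWedge_ne_zero (hinv : Function.Involutive c) (hdisj : Disjoint S (S.image c))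
    (hI : I ⊆ S) (hJ : J ⊆ S.image c) (hKS : K ⊆ S) (hK : Disjoint K (I ∪ J.image c)) :
    LK k c K * eWedge k (I ∪ J) ≠ 0 := by
  have hcS : ∀ x ∈ S, c x ∉ S := fun x hx hcx =>
    Finset.disjoint_left.mp hdisj hcx (Finset.mem_image_of_mem c hx)
  rw [LK, eWedge, prod_map_Lsigma, ← List.prod_append, ← List.map_append,
    prod_map_eVec_ne_zero_iff, List.nodup_append]
  refine ⟨List.nodup_flatMap_pair hinv.injective (Finset.sort_nodup _ _) fun x hx y hy hxy => ?_,
    Finset.sort_nodup _ _, ?_⟩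
  · simp only [Finset.mem_sort] at hx hy
    exact hcS x (hKS hx) (hxy ▸ hKS hy)
  · simp only [List.mem_flatMap, Finset.mem_sort, List.mem_cons, List.not_mem_nil, or_false,
      Finset.mem_union, ne_eq, forall_exists_index, and_imp]
    rintro _ σ hσ (rfl | rfl) _ (hb | hb) rfl
    · exact Finset.disjoint_left.mp hK hσ (Finset.mem_union_left _ hb)
    · exact Finset.disjoint_left.mp hdisj (hKS hσ) (hJ hb)
    · exact hcS σ (hKS hσ) (hI hb)
    · refine Finset.disjoint_left.mp hK hσ (Finset.mem_union_right _ ?_)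
      simpa [hinv σ] using Finset.mem_image_of_mem c hb

end Ordered

theorem stmt7_general (k X : Type*) [Field k] [CharZero k] [LinearOrder X]
    (c : X → X) (hinv : Function.Involutive c)
    (S : Finset X) (hdisj : Disjoint S (S.image c))
    (g : ℕ) (hg : g = S.card)
    (I J : Finset X) (hI : I ⊆ S) (hJ : J ⊆ S.image c)
    (i : ℕ) (hcard : I.card + J.card = i) (hig : i ≤ g)
    (hne : I ∩ J.image c ≠ ∅) :
    Lef k c S ^ (g - i + 1) * eWedge k (I ∪ J) ≠ 0 := by
  have hJc : J.image c ⊆ S := by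
    simpa [Finset.image_image, hinv.comp_self] using Finset.image_subset_image (f := c) hJ
  obtain ⟨K, hK, hKcard⟩ : ∃ K ⊆ S \ (I ∪ J.image c), K.card = g - i + 1 := by
    refine Finset.exists_subset_card_eq ?_
    have := Finset.card_add_one_le_card_sdiff_union_add hI hJc
      (Finset.nonempty_iff_ne_empty.mpr hne)
    have := Finset.card_image_le (s := J) (f := c)
    omega
  obtain ⟨hKS, hKdisj⟩ := Finset.subset_sdiff.mp hK
  intro h
  apply LK_mul_eWedge_ne_zero (k := k) hinv hdisj hI hJ hKS hKdisj
  have := map_zeroCoords_Lef_pow_mul_eWedge (k := k) (I := I) hdisj hJ hKS (g - i + 1)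
  rw [h, map_zero, ← hKcard, sum_Lsigma_pow_card, smul_mul_assoc,
    ← Nat.cast_smul_eq_nsmul k] at this
  exact (smul_eq_zero.mp this.symm).resolve_left (Nat.cast_ne_zero.mpr K.card.factorial_ne_zero)

/-- Lemma 2.5 of the paper, in the exterior-algebra model: if `I ⊆ Σ`, `J ⊆ cΣ`,
`|I| + |J| = i ≤ g` and `I ∩ c(J) ≠ ∅`, then `L^{g-i+1} ∧ e_{I∪J} ≠ 0`
(a class of such a type is not primitive). -/
theorem stmt7 (k X : Type*) [Field k] [CharZero k] [Fintype X] [LinearOrder X]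
    (c : X → X) (hinv : Function.Involutive c) (hfree : ∀ x : X, c x ≠ x)
    (S : Finset X) (hdisj : Disjoint S (S.image c)) (hcover : S ∪ S.image c = Finset.univ)
    (g : ℕ) (hg : g = S.card)
    (I J : Finset X) (hI : I ⊆ S) (hJ : J ⊆ S.image c)
    (i : ℕ) (hcard : I.card + J.card = i) (hig : i ≤ g)
    (hne : I ∩ J.image c ≠ ∅) :
    Lef k c S ^ (g - i + 1) * eWedge k (I ∪ J) ≠ 0 :=
  stmt7_general k X c hinv S hdisj g hg I J hI hJ i hcard hig hne
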